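/- (Doob-type inequality under a concatenation-stable family of measures.) Let M be a nonnegative càdlàg process that is a submartingale under some Q̂ in a family Q of equivalent measures stable under concatenation. Then for every β ∈ (0,1): sup_{Q∈Q} E^Q[(sup_{0≤t≤T} M_t)^β] ≤ (1/(1-β)) · (sup_{Q∈Q} E^Q[M_T])^β. -/

import Mathlib

open MeasureTheory Filter Set ENNReal NNReal

/-!
Stop `M` at the first point of a finite grid where it exceeds `a`. Optional sampling for the
`Q̂`-submartingale gives `a · 1{M exceeds a on the grid} ≤ E^Q̂[M_T | F_τ]`. Integrated against
`Q ∈ 𝒬` this is an expectation under the pasting `Q ⊗_τ Q̂ ∈ 𝒬`, so it is at most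
`C ≥ sup_{Q ∈ 𝒬} E^Q[M_T]`: the weak-type bound `a · Q(sup_grid M > a) ≤ C`. Right-continuity
passes it to the supremum over `[0, T]`, and the layer-cake formula turns it into the bound on
the `β`-th moment, `∫₀^∞ β t^{β-1} min(1, C/t) dt = C^β / (1 - β)`.
-/

namespace MeasureTheory

section ConditionalLExpectation

variable {Ω : Type*} {m m0 : MeasurableSpace Ω} {μ : Measure Ω}

theorem ae_monotone_condLExp {f : ℕ → Ω → ℝ≥0∞} (hmono : Monotone f) :
    ∀ᵐ ω ∂μ, Monotone fun n => μ⁻[f n|m] ω := by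
  filter_upwards [ae_all_iff.2 fun n : ℕ => condLExp_mono (mΩ := m) (ae_of_all μ (hmono n.le_succ))]
    with ω hω using monotone_nat_of_le_succ hω

theorem condLExp_iSup_ae_eq (hm : m ≤ m0) [SigmaFinite (μ.trim hm)] {f : ℕ → Ω → ℝ≥0∞}
    (hf : ∀ n, Measurable (f n)) (hmono : Monotone f) :
    μ⁻[fun ω => ⨆ n, f n ω|m] =ᵐ[μ] fun ω => ⨆ n, μ⁻[f n|m] ω := by
  refine (ae_eq_condLExp hm μ _ (Measurable.iSup fun n => measurable_condLExp m μ (f n))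
    fun s hs => ?_).symm
  rw [lintegral_iSup' (fun n => (measurable_condLExp' m μ (f n)).aemeasurable)
    (ae_restrict_of_ae (ae_monotone_condLExp hmono)), lintegral_iSup hf hmono]
  simp_rw [setLIntegral_condLExp hm μ _ hs]

theorem ae_le_condLExp_of_forall_setLIntegral_le (hm : m ≤ m0) [SigmaFinite (μ.trim hm)]
    {X Y : Ω → ℝ≥0∞} (hY : Measurable[m] Y)
    (hYX : ∀ s, MeasurableSet[m] s → ∫⁻ ω in s, Y ω ∂μ ≤ ∫⁻ ω in s, X ω ∂μ) :
    Y ≤ᵐ[μ] μ⁻[X|m] := by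
  refine ae_le_of_ae_le_trim (ae_le_of_forall_setLIntegral_le_of_sigmaFinite hY fun s hs _ => ?_)
  rw [setLIntegral_trim hm hY hs, setLIntegral_condLExp_trim hm μ X hs]
  exact hYX s hs

theorem ofReal_condExp_indicator_ae_eq [IsFiniteMeasure μ] {A : Set Ω} (hA : MeasurableSet A) :
    (fun ω => ENNReal.ofReal (μ[A.indicator (fun _ => (1 : ℝ))|m] ω))
      =ᵐ[μ] μ⁻[A.indicator 1|m] := by
  have hind : (fun ω => ENNReal.ofReal (A.indicator (fun _ => (1 : ℝ)) ω)) = A.indicator 1 := by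
    ext ω
    by_cases h : ω ∈ A <;> simp [h]
  have := condLExp_ofReal m ((integrable_const (1 : ℝ)).indicator hA)
    (ae_of_all μ (indicator_nonneg fun _ _ => zero_le_one))
  rw [hind] at this
  exact this.symm

theorem lintegral_condLExp_eq_of_forall_measure_eq (hm : m ≤ m0) [SigmaFinite (μ.trim hm)]
    {ν ν' : Measure Ω} (hνμ : ν ≪ μ)
    (hν' : ∀ A, MeasurableSet A → ν' A = ∫⁻ ω, μ⁻[A.indicator 1|m] ω ∂ν)
    {X : Ω → ℝ≥0∞} (hX : Measurable X) :
    ∫⁻ ω, μ⁻[X|m] ω ∂ν = ∫⁻ ω, X ω ∂ν' := by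
  refine Measurable.ennreal_induction (motive := fun X => ∫⁻ ω, μ⁻[X|m] ω ∂ν = ∫⁻ ω, X ω ∂ν')
    (fun c s hs => ?_) (fun f g _ hf _ ihf ihg => ?_) (fun f hf hmono ih => ?_) hX
  · have hcs : s.indicator (fun _ => c) = c • s.indicator 1 := by
      ext ω
      by_cases h : ω ∈ s <;> simp [h]
    rw [hcs, lintegral_congr_ae (hνμ.ae_le
      (condLExp_smul _ ((measurable_one.indicator hs).aemeasurable) c))]
    simp only [Pi.smul_apply, smul_eq_mul]
    rw [lintegral_const_mul _ (measurable_condLExp' m μ _), ← hν' s hs,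
      lintegral_const_mul _ (measurable_one.indicator hs), lintegral_indicator_one hs]
  · rw [lintegral_congr_ae (hνμ.ae_le (condLExp_add_left g hf.aemeasurable))]
    simp only [Pi.add_apply]
    rw [lintegral_add_left (measurable_condLExp' m μ f), lintegral_add_left hf, ihf, ihg]
  · rw [lintegral_congr_ae (hνμ.ae_le (condLExp_iSup_ae_eq hm hf hmono)),
      lintegral_iSup' (fun n => (measurable_condLExp' m μ (f n)).aemeasurable)
        (hνμ.ae_le (ae_monotone_condLExp hmono)), lintegral_iSup hf hmono]
    simp_rw [ih]

end ConditionalLExpectation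

section OptionalSampling

variable {Ω ι : Type*} {m0 : MeasurableSpace Ω} {μ : Measure Ω}

theorem Submartingale.setLIntegral_ofReal_le [Preorder ι] {ℱ : Filtration ι m0}
    [SigmaFiniteFiltration μ ℱ] {M : ι → Ω → ℝ} (hsub : Submartingale M ℱ μ)
    (hM : ∀ i ω, 0 ≤ M i ω) {i j : ι} (hij : i ≤ j) {s : Set Ω} (hs : MeasurableSet[ℱ i] s) :
    ∫⁻ ω in s, ENNReal.ofReal (M i ω) ∂μ ≤ ∫⁻ ω in s, ENNReal.ofReal (M j ω) ∂μ := by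
  rw [← ofReal_integral_eq_lintegral_ofReal (hsub.integrable i).integrableOn
      (ae_of_all _ (hM i)),
    ← ofReal_integral_eq_lintegral_ofReal (hsub.integrable j).integrableOn (ae_of_all _ (hM j))]
  exact ENNReal.ofReal_le_ofReal (hsub.setIntegral_le hij hs)

theorem Submartingale.setLIntegral_ofReal_stopped_le [LinearOrder ι] [TopologicalSpace ι]
    [OrderTopology ι] [FirstCountableTopology ι] {ℱ : Filtration ι m0}
    [SigmaFiniteFiltration μ ℱ] {M : ι → Ω → ℝ} (hsub : Submartingale M ℱ μ)
    (hM : ∀ i ω, 0 ≤ M i ω) {τ : Ω → ι} (hτ : IsStoppingTime ℱ (fun ω => (τ ω : WithTop ι)))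
    {R : Finset ι} (hτR : ∀ ω, τ ω ∈ R) {n : ι} (hRn : ∀ i ∈ R, i ≤ n) {s : Set Ω}
    (hs : MeasurableSet[hτ.measurableSpace] s) :
    ∫⁻ ω in s, ENNReal.ofReal (M (τ ω) ω) ∂μ ≤ ∫⁻ ω in s, ENNReal.ofReal (M n ω) ∂μ := by
  have hfiber : ∀ i, MeasurableSet[ℱ i] (s ∩ {ω | τ ω = i}) := fun i => by
    simpa using (hτ.measurableSet_inter_eq_iff s i).1 (hs.inter (hτ.measurableSet_eq' i))
  have hs_eq : s = ⋃ i ∈ R, s ∩ {ω | τ ω = i} := by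
    ext ω
    simp [hτR ω]
  have hdisj : (R : Set ι).PairwiseDisjoint fun i => s ∩ {ω | τ ω = i} :=
    fun i _ j _ hij => Disjoint.mono inter_subset_right inter_subset_right
      (disjoint_left.2 fun ω hi hj => hij (hi.symm.trans hj))
  have hmeas : ∀ i ∈ R, MeasurableSet (s ∩ {ω | τ ω = i}) := fun i _ => ℱ.le i _ (hfiber i)
  calc ∫⁻ ω in s, ENNReal.ofReal (M (τ ω) ω) ∂μ
      = ∑ i ∈ R, ∫⁻ ω in s ∩ {ω | τ ω = i}, ENNReal.ofReal (M (τ ω) ω) ∂μ := by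
        conv_lhs => rw [hs_eq]
        exact lintegral_biUnion_finset hdisj hmeas _
    _ = ∑ i ∈ R, ∫⁻ ω in s ∩ {ω | τ ω = i}, ENNReal.ofReal (M i ω) ∂μ :=
        Finset.sum_congr rfl fun i hi => setLIntegral_congr_fun (hmeas i hi) fun ω hω => by
          rw [hω.2]
    _ ≤ ∑ i ∈ R, ∫⁻ ω in s ∩ {ω | τ ω = i}, ENNReal.ofReal (M n ω) ∂μ :=
        Finset.sum_le_sum fun i hi => hsub.setLIntegral_ofReal_le hM (hRn i hi) (hfiber i)
    _ = ∫⁻ ω in s, ENNReal.ofReal (M n ω) ∂μ := by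
        conv_rhs => rw [hs_eq]
        exact (lintegral_biUnion_finset hdisj hmeas _).symm

end OptionalSampling

section FirstExceedance

variable {Ω ι : Type*} [LinearOrder ι] {M : ι → Ω → ℝ} {G : Finset ι} {a : ℝ} {T : ι}

noncomputable def firstExceedance (M : ι → Ω → ℝ) (G : Finset ι) (a : ℝ) (T : ι) (ω : Ω) : ι :=
  if h : (G.filter fun s => a < M s ω).Nonempty then (G.filter fun s => a < M s ω).min' h else T

theorem firstExceedance_mem_insert (ω : Ω) : firstExceedance M G a T ω ∈ insert T G := by
  unfold firstExceedance
  split_ifs with h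
  · exact Finset.mem_insert_of_mem (Finset.mem_of_mem_filter _ (Finset.min'_mem _ h))
  · exact Finset.mem_insert_self _ _

theorem firstExceedance_mem {S : Set ι} (hT : T ∈ S) (hG : ∀ s ∈ G, s ∈ S) (ω : Ω) :
    firstExceedance M G a T ω ∈ S := by
  rcases Finset.mem_insert.1 (firstExceedance_mem_insert (M := M) (a := a) ω) with h | h
  · exact h ▸ hT
  · exact hG _ h

theorem firstExceedance_le (hG : ∀ s ∈ G, s ≤ T) (ω : Ω) : firstExceedance M G a T ω ≤ T :=
  firstExceedance_mem (S := Iic T) le_rfl hG ω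

theorem lt_apply_firstExceedance {ω : Ω} (h : ∃ s ∈ G, a < M s ω) :
    a < M (firstExceedance M G a T ω) ω := by
  have hne : (G.filter fun s => a < M s ω).Nonempty := by
    simpa [Finset.filter_nonempty_iff] using h
  rw [firstExceedance, dif_pos hne]
  exact (Finset.mem_filter.1 (Finset.min'_mem _ hne)).2

theorem firstExceedance_le_iff {t : ι} (htT : t < T) (ω : Ω) :
    firstExceedance M G a T ω ≤ t ↔ ∃ s ∈ G, s ≤ t ∧ a < M s ω := by
  unfold firstExceedance
  split_ifs with h
  · constructor
    · intro hle
      obtain ⟨hs, ha⟩ := Finset.mem_filter.1 (Finset.min'_mem _ h)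
      exact ⟨_, hs, hle, ha⟩
    · rintro ⟨s, hs, hst, ha⟩
      exact (Finset.min'_le _ s (Finset.mem_filter.2 ⟨hs, ha⟩)).trans hst
  · exact iff_of_false htT.not_ge fun ⟨s, hs, _, ha⟩ => h ⟨s, Finset.mem_filter.2 ⟨hs, ha⟩⟩

variable {m0 : MeasurableSpace Ω} {ℱ : Filtration ι m0}

theorem isStoppingTime_firstExceedance (hM : StronglyAdapted ℱ M) (hG : ∀ s ∈ G, s ≤ T) :
    IsStoppingTime ℱ fun ω => ((firstExceedance M G a T ω : ι) : WithTop ι) := by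
  intro t
  simp only [WithTop.coe_le_coe]
  rcases le_or_gt T t with hTt | htT
  · simp [(firstExceedance_le hG _).trans hTt]
  · have : {ω | firstExceedance M G a T ω ≤ t} = ⋃ s ∈ G.filter (· ≤ t), {ω | a < M s ω} := by
      ext ω
      simp [firstExceedance_le_iff htT, and_assoc]
    rw [this]
    exact Finset.measurableSet_biUnion _ fun s hs =>
      ℱ.mono (Finset.mem_filter.1 hs).2 _ (measurableSet_lt measurable_const (hM s).measurable)

theorem measurableSet_exists_lt_of_firstExceedance (hM : StronglyAdapted ℱ M)
    (hG : ∀ s ∈ G, s ≤ T) :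
    MeasurableSet[(isStoppingTime_firstExceedance (a := a) hM hG).measurableSpace]
      {ω | ∃ s ∈ G, a < M s ω} := by
  have hafter : ∀ t, T ≤ t → MeasurableSet[ℱ t] {ω | ∃ s ∈ G, a < M s ω} := fun t hTt => by
    have : {ω | ∃ s ∈ G, a < M s ω} = ⋃ s ∈ G, {ω | a < M s ω} := by ext; simp
    rw [this]
    exact Finset.measurableSet_biUnion G fun s hs =>
      ℱ.mono ((hG s hs).trans hTt) _ (measurableSet_lt measurable_const (hM s).measurable)
  refine ⟨le_iSup (fun t => ℱ t) T _ (hafter T le_rfl), fun t => ?_⟩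
  simp only [WithTop.coe_le_coe]
  rcases le_or_gt T t with hTt | htT
  · simpa [(firstExceedance_le hG _).trans hTt] using hafter t hTt
  · have : {ω | ∃ s ∈ G, a < M s ω} ∩ {ω | firstExceedance M G a T ω ≤ t}
        = {ω | firstExceedance M G a T ω ≤ t} := by
      refine inter_eq_right.2 fun ω hω => ?_
      obtain ⟨s, hs, -, h⟩ := (firstExceedance_le_iff htT ω).1 hω
      exact ⟨s, hs, h⟩
    rw [this]
    simpa using (isStoppingTime_firstExceedance (a := a) hM hG) t

end FirstExceedance

end MeasureTheory

namespace MeasureTheory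

variable {Ω : Type*} {m0 : MeasurableSpace Ω}

theorem Submartingale.mul_measure_exists_lt_le {ℱ : Filtration ℝ m0} {P Q : Measure Ω}
    [IsFiniteMeasure P] (hQP : Q ≪ P) {M : ℝ → Ω → ℝ} (hsub : Submartingale M ℱ P)
    (hM : ∀ t ω, 0 ≤ M t ω) {T : ℝ} (hT : 0 ≤ T) {C : ℝ≥0∞}
    (hstopped : ∀ (τ : Ω → ℝ) (hτ : IsStoppingTime ℱ fun ω => (τ ω : WithTop ℝ)),
      (∀ ω, τ ω ∈ Icc 0 T) →
      ∫⁻ ω, P⁻[fun ω => ENNReal.ofReal (M T ω)|hτ.measurableSpace] ω ∂Q ≤ C)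
    {G : Finset ℝ} (hG : ∀ s ∈ G, s ∈ Icc 0 T) (a : ℝ≥0) :
    a * Q {ω | ∃ s ∈ G, (a : ℝ) < M s ω} ≤ C := by
  have hGT : ∀ s ∈ G, s ≤ T := fun s hs => (hG s hs).2
  have hτ := isStoppingTime_firstExceedance (a := a) hsub.stronglyAdapted hGT
  set A := {ω | ∃ s ∈ G, (a : ℝ) < M s ω}
  have hA : MeasurableSet[hτ.measurableSpace] A :=
    measurableSet_exists_lt_of_firstExceedance hsub.stronglyAdapted hGT
  have hle_stopped : A.indicator (fun _ => (a : ℝ≥0∞))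
      ≤ fun ω => ENNReal.ofReal (M (firstExceedance M G a T ω) ω) := by
    intro ω
    by_cases hω : ω ∈ A
    · rw [indicator_of_mem hω, ← ofReal_coe_nnreal]
      exact ENNReal.ofReal_le_ofReal (lt_apply_firstExceedance hω).le
    · simp [hω]
  have hle_condLExp : A.indicator (fun _ => (a : ℝ≥0∞))
      ≤ᵐ[P] P⁻[fun ω => ENNReal.ofReal (M T ω)|hτ.measurableSpace] :=
    ae_le_condLExp_of_forall_setLIntegral_le hτ.measurableSpace_le
      (measurable_const.indicator hA) fun s hs =>
      (lintegral_mono fun ω => hle_stopped ω).trans <|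
        hsub.setLIntegral_ofReal_stopped_le hM hτ firstExceedance_mem_insert
          (fun i hi => (Finset.mem_insert.1 hi).elim le_of_eq (hGT i)) hs
  calc a * Q A = ∫⁻ ω, A.indicator (fun _ => (a : ℝ≥0∞)) ω ∂Q :=
        (lintegral_indicator_const (hτ.measurableSpace_le _ hA) _).symm
    _ ≤ ∫⁻ ω, P⁻[fun ω => ENNReal.ofReal (M T ω)|hτ.measurableSpace] ω ∂Q :=
        lintegral_mono_ae (hQP.ae_le hle_condLExp)
    _ ≤ C := hstopped _ hτ (firstExceedance_mem ⟨hT, le_rfl⟩ hG)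

theorem mul_measure_lt_iSup_le_of_forall_finset {ι : Type*} [Countable ι] {μ : Measure Ω}
    {f : ι → Ω → ℝ≥0∞} {c C : ℝ≥0∞} (h : ∀ F : Finset ι, c * μ {ω | ∃ i ∈ F, c < f i ω} ≤ C) :
    c * μ {ω | c < ⨆ i, f i ω} ≤ C := by
  have hunion : {ω | c < ⨆ i, f i ω} = ⋃ F : Finset ι, {ω | ∃ i ∈ F, c < f i ω} := by
    ext ω
    simp only [mem_ofPred_eq, lt_iSup_iff, mem_iUnion]
    exact ⟨fun ⟨i, hi⟩ => ⟨{i}, i, Finset.mem_singleton_self i, hi⟩,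
      fun ⟨_, i, _, hi⟩ => ⟨i, hi⟩⟩
  have hmono : Monotone fun F : Finset ι => {ω | ∃ i ∈ F, c < f i ω} :=
    fun F F' hF ω ⟨i, hi, hc⟩ => ⟨i, hF hi, hc⟩
  rw [hunion, hmono.measure_iUnion, ENNReal.mul_iSup]
  exact iSup_le h

theorem Submartingale.mul_measure_lt_iSup_le {ℱ : Filtration ℝ m0} {P Q : Measure Ω}
    [IsFiniteMeasure P] (hQP : Q ≪ P) {M : ℝ → Ω → ℝ} (hsub : Submartingale M ℱ P)
    (hM : ∀ t ω, 0 ≤ M t ω) {T : ℝ} (hT : 0 ≤ T) {C : ℝ≥0∞}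
    (hstopped : ∀ (τ : Ω → ℝ) (hτ : IsStoppingTime ℱ fun ω => (τ ω : WithTop ℝ)),
      (∀ ω, τ ω ∈ Icc 0 T) →
      ∫⁻ ω, P⁻[fun ω => ENNReal.ofReal (M T ω)|hτ.measurableSpace] ω ∂Q ≤ C)
    {D : Set ℝ} (hD : D.Countable) (hDT : D ⊆ Icc 0 T) (a : ℝ≥0) :
    a * Q {ω | a < ⨆ t : D, ENNReal.ofReal (M t ω)} ≤ C := by
  have := hD.to_subtype
  refine mul_measure_lt_iSup_le_of_forall_finset fun F => ?_
  simpa [ENNReal.coe_lt_ofReal] using hsub.mul_measure_exists_lt_le hQP hM hT hstopped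
    (G := F.map (Function.Embedding.subtype _)) (fun s hs => by
      obtain ⟨t, -, rfl⟩ := Finset.mem_map.1 hs
      exact hDT t.2) a

end MeasureTheory

section WeakType

variable {α : Type*} [MeasurableSpace α] {μ : Measure α}

theorem ae_ne_top_of_forall_mul_meas_lt_le {f : α → ℝ≥0∞} {C : ℝ≥0∞}
    (hC : ∀ a : ℝ≥0, a * μ {x | a < f x} ≤ C) (hCtop : C ≠ ∞) : ∀ᵐ x ∂μ, f x ≠ ∞ := by
  rw [ae_iff]
  by_contra h
  have hle : ∀ n : ℕ, (n : ℝ≥0∞) * μ {x | ¬f x ≠ ∞} ≤ C := fun n => by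
    refine le_trans ?_ (hC n)
    gcongr
    · simp
    · simp_all
  have := iSup_le hle
  rw [← ENNReal.iSup_mul, ENNReal.iSup_natCast, ENNReal.top_mul h] at this
  exact hCtop (top_le_iff.1 this)

theorem integral_mul_rpow_sub_one {β x : ℝ} (hβ : 0 < β) :
    ∫ t in (0)..x, β * t ^ (β - 1) = x ^ β := by
  rw [intervalIntegral.integral_const_mul, integral_rpow (Or.inl (by linarith))]
  simp [Real.zero_rpow hβ.ne', mul_div_cancel₀, hβ.ne']

theorem lintegral_rpow_eq_lintegral_meas_lt_mul {f : α → ℝ≥0∞} (hf : AEMeasurable f μ)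
    (hf_top : ∀ᵐ x ∂μ, f x ≠ ∞) {β : ℝ} (hβ : 0 < β) :
    ∫⁻ x, f x ^ β ∂μ =
      ∫⁻ t in Ioi 0, μ {x | t < (f x).toReal} * ENNReal.ofReal (β * t ^ (β - 1)) := by
  rw [← lintegral_comp_eq_lintegral_meas_lt_mul μ (ae_of_all _ fun x => toReal_nonneg)
    hf.ennreal_toReal
    (fun t _ => (intervalIntegral.intervalIntegrable_rpow' (by linarith)).const_mul β)
    ((ae_restrict_iff' measurableSet_Ioi).2 (ae_of_all _ fun t (ht : 0 < t) => by positivity))]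
  refine lintegral_congr_ae ?_
  filter_upwards [hf_top] with x hx
  rw [integral_mul_rpow_sub_one hβ, ← ENNReal.ofReal_rpow_of_nonneg toReal_nonneg hβ.le,
    ofReal_toReal hx]

theorem lintegral_Ioc_mul_rpow_sub_one {β c : ℝ} (hβ : 0 < β) (hc : 0 ≤ c) :
    ∫⁻ t in Ioc 0 c, ENNReal.ofReal (β * t ^ (β - 1)) = ENNReal.ofReal (c ^ β) := by
  rw [← ofReal_integral_eq_lintegral_ofReal
    ((intervalIntegral.intervalIntegrable_rpow' (by linarith)).const_mul β).1
    ((ae_restrict_iff' measurableSet_Ioc).2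
      (ae_of_all _ fun t ht => mul_nonneg hβ.le (Real.rpow_nonneg ht.1.le _))),
    ← intervalIntegral.integral_of_le hc, integral_mul_rpow_sub_one hβ]

theorem measure_lt_toReal_le_div_of_forall_mul_meas_lt_le {f : α → ℝ≥0∞} {C : ℝ≥0∞}
    (hC : ∀ a : ℝ≥0, a * μ {x | a < f x} ≤ C) {t : ℝ} (ht : 0 < t) :
    μ {x | t < (f x).toReal} ≤ C / ENNReal.ofReal t := by
  rw [ENNReal.le_div_iff_mul_le (Or.inl (ofReal_pos.2 ht).ne') (Or.inl ofReal_ne_top), mul_comm]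
  refine le_trans (mul_le_mul_right (measure_mono fun x hx => ?_) _) (hC t.toNNReal)
  exact (ofReal_lt_iff_lt_toReal ht.le (toReal_pos_iff.1 (ht.trans hx)).2.ne).2 hx

theorem lintegral_Ioi_mul_rpow_sub_two {β c : ℝ} (hβ0 : 0 ≤ β) (hβ : β < 1) (hc : 0 < c) :
    ∫⁻ t in Ioi c, ENNReal.ofReal (β * t ^ (β - 2))
      = ENNReal.ofReal (β * c ^ (β - 1) / (1 - β)) := by
  rw [← ofReal_integral_eq_lintegral_ofReal
    ((integrableOn_Ioi_rpow_of_lt (by linarith) hc).const_mul β)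
    ((ae_restrict_iff' measurableSet_Ioi).2 (ae_of_all _ fun t (ht : c < t) =>
      by have := hc.trans ht; positivity)),
    integral_const_mul, integral_Ioi_rpow_of_lt (by linarith) hc,
    show β - 2 + 1 = β - 1 by ring, neg_div, ← div_neg, neg_sub, mul_div_assoc]

theorem lintegral_rpow_le_of_forall_mul_meas_lt_le [IsProbabilityMeasure μ] {f : α → ℝ≥0∞}
    (hf : AEMeasurable f μ) {C : ℝ≥0∞} (hC : ∀ a : ℝ≥0, a * μ {x | a < f x} ≤ C) {β : ℝ}
    (hβ0 : 0 < β) (hβ1 : β < 1) :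
    ∫⁻ x, f x ^ β ∂μ ≤ (ENNReal.ofReal (1 - β))⁻¹ * C ^ β := by
  rcases eq_or_ne C ∞ with rfl | hCtop
  · simp [ENNReal.top_rpow_of_pos hβ0]
  set c := C.toReal
  rw [lintegral_rpow_eq_lintegral_meas_lt_mul hf (ae_ne_top_of_forall_mul_meas_lt_le hC hCtop)
    hβ0, ← Ioc_union_Ioi_eq_Ioi toReal_nonneg,
    lintegral_union measurableSet_Ioi Ioc_disjoint_Ioi_same]
  have hsmall : ∫⁻ t in Ioc 0 c, μ {x | t < (f x).toReal} * ENNReal.ofReal (β * t ^ (β - 1))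
      ≤ ENNReal.ofReal (c ^ β) := by
    rw [← lintegral_Ioc_mul_rpow_sub_one hβ0 toReal_nonneg]
    exact setLIntegral_mono' measurableSet_Ioc fun t _ => mul_le_of_le_one_left' prob_le_one
  have hlarge : ∫⁻ t in Ioi c, μ {x | t < (f x).toReal} * ENNReal.ofReal (β * t ^ (β - 1))
      ≤ C * ∫⁻ t in Ioi c, ENNReal.ofReal (β * t ^ (β - 2)) := by
    rw [← lintegral_const_mul' _ _ hCtop]
    refine setLIntegral_mono' measurableSet_Ioi fun t (ht : c < t) => ?_
    have ht0 : 0 < t := toReal_nonneg.trans_lt ht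
    calc μ {x | t < (f x).toReal} * ENNReal.ofReal (β * t ^ (β - 1))
        ≤ C / ENNReal.ofReal t * ENNReal.ofReal (β * t ^ (β - 1)) := by
          gcongr
          exact measure_lt_toReal_le_div_of_forall_mul_meas_lt_le hC ht0
      _ = C * ENNReal.ofReal (β * t ^ (β - 2)) := by
        have hpow : t⁻¹ * (β * t ^ (β - 1)) = β * t ^ (β - 2) := by
          rw [show β - 2 = β - 1 - 1 by ring, Real.rpow_sub_one ht0.ne' (β - 1)]
          field_simp
        rw [div_eq_mul_inv, mul_assoc, ← ofReal_inv_of_pos ht0,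
          ← ofReal_mul (inv_nonneg.2 ht0.le), hpow]
  refine (add_le_add hsmall hlarge).trans ?_
  rcases eq_or_ne C 0 with hC0 | hC0
  · simp [hC0, c, Real.zero_rpow hβ0.ne']
  have hc0 : 0 < c := toReal_pos hC0 hCtop
  have h1β : 0 < 1 - β := by linarith
  rw [lintegral_Ioi_mul_rpow_sub_two hβ0.le hβ1 hc0, ← ofReal_toReal hCtop, ← ofReal_mul hc0.le,
    ← ofReal_add (by positivity) (by positivity), ofReal_rpow_of_pos hc0,
    ← ofReal_inv_of_pos h1β, ← ofReal_mul (by positivity), Real.rpow_sub_one hc0.ne']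
  refine le_of_eq (congrArg ENNReal.ofReal ?_)
  field_simp
  ring

end WeakType

section RationalPoints

theorem le_of_forall_rat_le_of_continuousWithinAt_Ici {f : ℝ → ℝ} {t T b : ℝ}
    (hf : ContinuousWithinAt f (Ici t) t) (htT : t < T)
    (hb : ∀ q : ℚ, t < q → (q : ℝ) < T → f q ≤ b) : f t ≤ b := by
  have hts : t ∈ closure (Ioo t T ∩ range ((↑) : ℚ → ℝ)) := by
    refine closure_minimal (Rat.denseRange_cast.open_subset_closure_inter isOpen_Ioo)
      isClosed_closure ?_
    rw [closure_Ioo htT.ne]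
    exact ⟨le_rfl, htT.le⟩
  refine ContinuousWithinAt.closure_le (g := fun _ => b) hts (hf.mono fun u hu => hu.1.1.le)
    continuousWithinAt_const ?_
  rintro _ ⟨⟨htq, hqT⟩, q, rfl⟩
  exact hb q htq hqT

-- `T` is added because right-continuity only reaches the points `t < T` of `[0, T]`.
def ratPointsIcc (T : ℝ) : Set ℝ := insert T (Icc 0 T ∩ range ((↑) : ℚ → ℝ))

theorem countable_ratPointsIcc (T : ℝ) : (ratPointsIcc T).Countable :=
  ((countable_range _).mono inter_subset_right).insert T

theorem ratPointsIcc_subset_Icc {T : ℝ} (hT : 0 ≤ T) : ratPointsIcc T ⊆ Icc 0 T :=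
  insert_subset ⟨hT, le_rfl⟩ inter_subset_left

theorem ofReal_iSup_Icc_le_iSup_ratPointsIcc {f : ℝ → ℝ} {T : ℝ}
    (hf : ∀ t, ContinuousWithinAt f (Ici t) t) :
    ENNReal.ofReal (⨆ t : Icc (0 : ℝ) T, f t) ≤ ⨆ t : ratPointsIcc T, ENNReal.ofReal (f t) := by
  set N := ⨆ t : ratPointsIcc T, ENNReal.ofReal (f t)
  rcases eq_or_ne N ∞ with hN | hN
  · simp [hN]
  have hbound : ∀ u ∈ ratPointsIcc T, f u ≤ N.toReal := fun u hu =>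
    (ofReal_le_iff_le_toReal hN).1
      (le_iSup (fun t : ratPointsIcc T => ENNReal.ofReal (f t)) ⟨u, hu⟩)
  rw [ofReal_le_iff_le_toReal hN]
  -- `Real.iSup_le` also covers an unbounded path, whose real supremum is `0` by convention.
  refine Real.iSup_le (fun ⟨t, ht0, htT⟩ => ?_) toReal_nonneg
  rcases htT.eq_or_lt with rfl | htT
  · exact hbound _ (mem_insert _ _)
  · exact le_of_forall_rat_le_of_continuousWithinAt_Ici (hf t) htT fun q htq hqT =>
      hbound _ (mem_insert_of_mem _ ⟨⟨ht0.trans htq.le, hqT.le⟩, q, rfl⟩)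

end RationalPoints

theorem supDoob_nonlinear_general
    {Ω : Type*} {m0 : MeasurableSpace Ω} (P : Measure Ω)
    (ℱ : Filtration ℝ m0) (T : ℝ) (hT : 0 < T)
    (𝒬 : Set (Measure Ω))
    (hprob : ∀ Q ∈ 𝒬, IsProbabilityMeasure Q)
    (hequiv : ∀ Q ∈ 𝒬, Q ≪ P ∧ P ≪ Q)
    (Qhat : Measure Ω) (hQhat : Qhat ∈ 𝒬)
    (M : ℝ → Ω → ℝ) (hsub : Submartingale M ℱ Qhat)
    (hMpos : ∀ t ω, 0 ≤ M t ω)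
    (hrc : ∀ ω t, ContinuousWithinAt (fun s => M s ω) (Ici t) t)
    (hconcat : ∀ Q ∈ 𝒬, ∀ (τ : Ω → ℝ) (hτ : IsStoppingTime ℱ (fun ω => (τ ω : WithTop ℝ))),
      (∀ ω, τ ω ∈ Icc 0 T) →
      ∃ Q' ∈ 𝒬, ∀ A : Set Ω, MeasurableSet A →
        Q' A = ∫⁻ ω, ENNReal.ofReal
          ((Qhat[A.indicator (fun _ => (1 : ℝ)) | hτ.measurableSpace]) ω) ∂Q)
    (β : ℝ) (hβ : β ∈ Ioo (0 : ℝ) 1) :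
    ∀ C : ℝ≥0∞, (∀ Q ∈ 𝒬, ∫⁻ ω, ENNReal.ofReal (M T ω) ∂Q ≤ C) →
      ∀ Q ∈ 𝒬,
        ∫⁻ ω, ENNReal.ofReal ((⨆ t : Icc (0 : ℝ) T, M t ω) ^ β) ∂Q
          ≤ (ENNReal.ofReal (1 - β))⁻¹ * C ^ β := by
  intro C hC Q hQ
  have := hprob Q hQ
  have := hprob Qhat hQhat
  have hQQhat : Q ≪ Qhat := (hequiv Q hQ).1.trans (hequiv Qhat hQhat).2
  have hMmeas : ∀ t, Measurable fun ω => ENNReal.ofReal (M t ω) := fun t =>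
    ((hsub.stronglyAdapted t).mono (ℱ.le t)).measurable.ennreal_ofReal
  have hstopped : ∀ (τ : Ω → ℝ) (hτ : IsStoppingTime ℱ fun ω => (τ ω : WithTop ℝ)),
      (∀ ω, τ ω ∈ Icc 0 T) →
      ∫⁻ ω, Qhat⁻[fun ω => ENNReal.ofReal (M T ω)|hτ.measurableSpace] ω ∂Q ≤ C := by
    intro τ hτ hτT
    obtain ⟨Q', hQ'mem, hQ'⟩ := hconcat Q hQ τ hτ hτT
    rw [lintegral_condLExp_eq_of_forall_measure_eq hτ.measurableSpace_le hQQhat (fun A hA =>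
      (hQ' A hA).trans (lintegral_congr_ae (hQQhat.ae_le (ofReal_condExp_indicator_ae_eq hA))))
      (hMmeas T)]
    exact hC Q' hQ'mem
  have := (countable_ratPointsIcc T).to_subtype
  calc ∫⁻ ω, ENNReal.ofReal ((⨆ t : Icc (0 : ℝ) T, M t ω) ^ β) ∂Q
      ≤ ∫⁻ ω, (⨆ t : ratPointsIcc T, ENNReal.ofReal (M t ω)) ^ β ∂Q := lintegral_mono fun ω => by
        rw [← ofReal_rpow_of_nonneg (Real.iSup_nonneg fun t : Icc (0 : ℝ) T => hMpos t ω) hβ.1.le]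
        exact rpow_le_rpow (ofReal_iSup_Icc_le_iSup_ratPointsIcc fun t => hrc ω t) hβ.1.le
    _ ≤ (ENNReal.ofReal (1 - β))⁻¹ * C ^ β :=
      lintegral_rpow_le_of_forall_mul_meas_lt_le
        (Measurable.iSup fun t : ratPointsIcc T => hMmeas t).aemeasurable
        (hsub.mul_measure_lt_iSup_le hQQhat hMpos hT.le hstopped (countable_ratPointsIcc T)
          (ratPointsIcc_subset_Icc hT.le)) hβ.1 hβ.2

/-- **Lemma 4.3 (supDoob).** Doob-type inequality under a concatenation-stable family of
equivalent measures: if the nonnegative càdlàg process `M` is a submartingale under some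
`Q̂ ∈ 𝒬`, then for every `β ∈ (0,1)`,
`sup_{Q ∈ 𝒬} E^Q[(sup_{0≤t≤T} M_t)^β] ≤ (1/(1-β)) · (sup_{Q ∈ 𝒬} E^Q[M_T])^β`
(equivalently, with any upper bound `C` of `{E^Q[M_T] : Q ∈ 𝒬}` in place of the inner sup). -/
theorem supDoob_nonlinear
    {Ω : Type*} {m0 : MeasurableSpace Ω} (P : Measure Ω) [IsProbabilityMeasure P]
    (ℱ : Filtration ℝ m0) (T : ℝ) (hT : 0 < T)
    (𝒬 : Set (Measure Ω))
    (hprob : ∀ Q ∈ 𝒬, IsProbabilityMeasure Q)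
    (hequiv : ∀ Q ∈ 𝒬, Q ≪ P ∧ P ≪ Q)
    (Qhat : Measure Ω) (hQhat : Qhat ∈ 𝒬)
    (M : ℝ → Ω → ℝ) (hsub : Submartingale M ℱ Qhat)
    (hMpos : ∀ t ω, 0 ≤ M t ω)
    (hrc : ∀ ω t, ContinuousWithinAt (fun s => M s ω) (Ici t) t)
    (hll : ∀ ω t, ∃ l : ℝ, Tendsto (fun s => M s ω) (nhdsWithin t (Iio t)) (nhds l))
    (hconcat : ∀ Q ∈ 𝒬, ∀ (τ : Ω → ℝ) (hτ : IsStoppingTime ℱ (fun ω => (τ ω : WithTop ℝ))),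
      (∀ ω, τ ω ∈ Icc 0 T) →
      ∃ Q' ∈ 𝒬, ∀ A : Set Ω, MeasurableSet A →
        Q' A = ∫⁻ ω, ENNReal.ofReal
          ((Qhat[A.indicator (fun _ => (1 : ℝ)) | hτ.measurableSpace]) ω) ∂Q)
    (β : ℝ) (hβ : β ∈ Ioo (0 : ℝ) 1) :
    ∀ C : ℝ≥0∞, (∀ Q ∈ 𝒬, ∫⁻ ω, ENNReal.ofReal (M T ω) ∂Q ≤ C) →
      ∀ Q ∈ 𝒬,
        ∫⁻ ω, ENNReal.ofReal ((⨆ t : Icc (0 : ℝ) T, M t ω) ^ β) ∂Q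
          ≤ (ENNReal.ofReal (1 - β))⁻¹ * C ^ β :=
  supDoob_nonlinear_general P ℱ T hT 𝒬 hprob hequiv Qhat hQhat M hsub hMpos hrc hconcat β hβ
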